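/- arXiv:0705.1961 — 8 statements merged into one kernel-verified Lean document; each statement's English description precedes it below -/
import Mathlib

section
/- Let φ : A → B be a *-homomorphism between C*-algebras. For every y in the range of φ there exists x ∈ A such that φ(x) = y and ‖x‖ = ‖y‖. -/
/-!
Let `r = ‖φ a‖ > 0` and `c = star a * a`. Cutting `a` down by the functional calculus of `c`,
`x = a · min(1, r / √c) = a - a · g(c)` with `g t = 1 - r / max r √t` (so that `g 0 = 0` and
the non-unital calculus applies), gives `star x * x = c · min(1, r² / c)`, whose norm is at most `r²`, so `‖x‖ ≤ r`. Since `g` vanishes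
on `[0, r²] ⊇ σₙ(φ c)`, we have `φ (g c) = g (φ c) = 0`, hence `φ x = φ a`; and `‖φ x‖ ≤ ‖x‖`
always.
-/

open CStarAlgebra NonUnitalIsometricContinuousFunctionalCalculus

namespace CStarAlgebra

variable {A : Type*} [NonUnitalCStarAlgebra A]

lemma nonneg_of_mem_quasispectrum_star_mul_self (a : A) {t : ℝ}
    (ht : t ∈ quasispectrum ℝ (star a * a)) : 0 ≤ t := by
  rw [Unitization.quasispectrum_eq_spectrum_inr' ℝ ℂ, Unitization.inr_mul,
    Unitization.inr_star] at ht
  exact spectrum_star_mul_self_nonneg t ht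

noncomputable def cutoff (r t : ℝ) : ℝ := 1 - r / max r (Real.sqrt t)

lemma continuous_cutoff {r : ℝ} (hr : 0 < r) : Continuous (cutoff r) :=
  continuous_const.sub <| continuous_const.div (by fun_prop)
    fun t => (hr.trans_le (le_max_left _ _)).ne'

lemma cutoff_of_le_sq {r t : ℝ} (hr : 0 < r) (ht : t ≤ r ^ 2) : cutoff r t = 0 := by
  have : Real.sqrt t ≤ r := Real.sqrt_le_iff.mpr ⟨hr.le, ht⟩
  simp [cutoff, max_eq_left this, hr.ne']

lemma mul_one_sub_cutoff_sq_le {r t : ℝ} (hr : 0 ≤ r) (ht : 0 ≤ t) :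
    t * (1 - cutoff r t) ^ 2 ≤ r ^ 2 := by
  rcases le_total (Real.sqrt t) r with h | h
  · rcases hr.eq_or_lt with rfl | hr
    · simp [cutoff]
    · simpa [cutoff, max_eq_left h, hr.ne'] using (Real.sqrt_le_iff.mp h).2
  · rw [cutoff, max_eq_right h, sub_sub_cancel, div_pow, Real.sq_sqrt ht, mul_div_left_comm]
    exact mul_le_of_le_one_right (sq_nonneg r) (div_self_le_one t)

lemma star_mul_self_sub_mul_cfcₙ (a : A) {g : ℝ → ℝ} (hg : Continuous g) (hg0 : g 0 = 0) :
    star (a - a * cfcₙ g (star a * a)) * (a - a * cfcₙ g (star a * a)) =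
      cfcₙ (fun t => t * (1 - g t) ^ 2) (star a * a) := by
  set c := star a * a
  set m := cfcₙ g c
  have hm : star m = m := (cfcₙ_predicate g c).star_eq
  have hk : cfcₙ (fun t => t - t * g t) c = c - c * m := by
    rw [cfcₙ_sub _ _ c, cfcₙ_mul _ _ c, cfcₙ_id' ℝ c]
  calc star (a - a * m) * (a - a * m) = (c - c * m) - m * (c - c * m) := by
        simp only [star_sub, star_mul, hm, c]
        noncomm_ring
    _ = cfcₙ (fun t => (t - t * g t) - g t * (t - t * g t)) c := by
        rw [cfcₙ_sub _ _ c, cfcₙ_mul _ _ c, hk]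
    _ = cfcₙ (fun t => t * (1 - g t) ^ 2) c := by
        congr 1; funext t; ring

lemma norm_sub_mul_cfcₙ_cutoff_le (a : A) {r : ℝ} (hr : 0 < r) :
    ‖a - a * cfcₙ (cutoff r) (star a * a)‖ ≤ r := by
  have hsq : ‖a - a * cfcₙ (cutoff r) (star a * a)‖ ^ 2 ≤ r ^ 2 := by
    rw [sq, ← CStarRing.norm_star_mul_self,
      star_mul_self_sub_mul_cfcₙ a (continuous_cutoff hr) (cutoff_of_le_sq hr (by positivity))]
    refine norm_cfcₙ_le fun t ht => ?_
    have ht0 := nonneg_of_mem_quasispectrum_star_mul_self a ht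
    rw [Real.norm_of_nonneg (by positivity)]
    exact mul_one_sub_cutoff_sq_le hr.le ht0
  exact (sq_le_sq₀ (norm_nonneg _) hr.le).mp hsq

end CStarAlgebra

namespace NonUnitalStarAlgHom

variable {A B : Type*} [NonUnitalCStarAlgebra A] [NonUnitalCStarAlgebra B]

lemma map_cfcₙ_cutoff_norm (φ : A →⋆ₙₐ[ℂ] B) (a : A) (ha : 0 < ‖φ a‖) :
    φ (cfcₙ (cutoff ‖φ a‖) (star a * a)) = 0 := by
  have hsa : IsSelfAdjoint (φ (star a * a)) := by
    simpa only [map_mul, map_star] using IsSelfAdjoint.star_mul_self (φ a)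
  rw [map_cfcₙ φ _ _ (continuous_cutoff ha).continuousOn
      (cutoff_of_le_sq ha (by positivity)) (hφa := hsa), map_mul, map_star,
    ← cfcₙ_zero ℝ (star (φ a) * φ a)]
  refine cfcₙ_congr fun t ht => cutoff_of_le_sq ha ?_
  calc t ≤ ‖t‖ := Real.le_norm_self t
    _ ≤ ‖star (φ a) * φ a‖ := norm_quasispectrum_le _ ht
    _ = ‖φ a‖ ^ 2 := by rw [CStarRing.norm_star_mul_self, sq]

theorem exists_apply_eq_and_norm_eq (φ : A →⋆ₙₐ[ℂ] B) (a : A) :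
    ∃ x, φ x = φ a ∧ ‖x‖ = ‖φ a‖ := by
  rcases (norm_nonneg (φ a)).eq_or_lt with hzero | hpos
  · exact ⟨0, by rw [map_zero, eq_comm, ← norm_eq_zero, hzero], by rw [norm_zero, hzero]⟩
  set x := a - a * cfcₙ (cutoff ‖φ a‖) (star a * a)
  have hx : φ x = φ a := by simp [x, map_cfcₙ_cutoff_norm φ a hpos]
  refine ⟨x, hx, le_antisymm (norm_sub_mul_cfcₙ_cutoff_le a hpos) ?_⟩
  exact hx ▸ norm_apply_le φ x

end NonUnitalStarAlgHom

theorem stmt_0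
    {A B : Type*} [NonUnitalNormedRing A] [StarRing A] [CStarRing A]
    [NormedSpace ℂ A] [IsScalarTower ℂ A A] [SMulCommClass ℂ A A]
    [StarModule ℂ A] [CompleteSpace A]
    [NonUnitalNormedRing B] [StarRing B] [CStarRing B]
    [NormedSpace ℂ B] [IsScalarTower ℂ B B] [SMulCommClass ℂ B B]
    [StarModule ℂ B] [CompleteSpace B]
    (φ : A →⋆ₙₐ[ℂ] B) :
    ∀ y ∈ Set.range φ, ∃ x : A, φ x = y ∧ ‖x‖ = ‖y‖ := by
  let _ : NonUnitalCStarAlgebra A := {}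
  let _ : NonUnitalCStarAlgebra B := {}
  rintro _ ⟨a, rfl⟩
  exact NonUnitalStarAlgHom.exists_apply_eq_and_norm_eq φ a
end

section
/- Let 𝓛 be a meet-semilattice. The following are equivalent: (a) every nonempty totally ordered subset of 𝓛 is well-ordered for the induced order (every nonempty subset of it has a least element); (b) every nonempty totally ordered subset of 𝓛 has a least element; (c) every nonempty subset of 𝓛 closed under ∧ has a least element; (d) every nonempty subset of 𝓛 that is closed under ∧ and upward closed has a least element. -/
/-!
Condition (b) says that every nonempty chain is bounded below within itself, so Zorn's lemma in
the dual order yields a minimal element of every nonempty set; in an inf-closed set a minimal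
element is least, since `m ⊓ x` lies in the set below `m`. Conversely, the upper closure of a
chain `C` is inf-closed and upward closed, and its least element lies above some element of `C`,
which is then least in `C`.
-/

section

variable {α : Type*}

lemma exists_minimal_of_forall_isChain_exists_isLeast [Preorder α]
    (h : ∀ c : Set α, c.Nonempty → IsChain (· ≤ ·) c → ∃ m, IsLeast c m)
    {s : Set α} (hs : s.Nonempty) : ∃ m, Minimal (· ∈ s) m := by
  obtain ⟨x, hx⟩ := hs
  refine zorn_le₀ (α := αᵒᵈ) s fun c hcs hc => ?_
  rcases c.eq_empty_or_nonempty with rfl | hc_ne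
  · exact ⟨x, hx, fun _ => False.elim⟩
  · obtain ⟨m, hmc, hm⟩ := h c hc_ne hc.symm
    exact ⟨m, hcs hmc, fun _ hz => hm hz⟩

lemma InfClosed.exists_isLeast [SemilatticeInf α]
    (h : ∀ c : Set α, c.Nonempty → IsChain (· ≤ ·) c → ∃ m, IsLeast c m)
    {s : Set α} (hs : InfClosed s) (hs_ne : s.Nonempty) : ∃ m, IsLeast s m := by
  obtain ⟨m, hm⟩ := exists_minimal_of_forall_isChain_exists_isLeast h hs_ne
  exact ⟨m, hs.codirectedOn.minimal_iff_isLeast.mp hm⟩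

lemma IsChain.infClosed_upperClosure [SemilatticeInf α] {c : Set α}
    (hc : IsChain (· ≤ ·) c) : InfClosed (upperClosure c : Set α) := by
  rintro i ⟨a, ha, hai⟩ j ⟨b, hb, hbj⟩
  rcases hc.total ha hb with hab | hba
  · exact ⟨a, ha, le_inf hai (hab.trans hbj)⟩
  · exact ⟨b, hb, le_inf (hba.trans hai) hbj⟩

lemma IsLeast.exists_isLeast_of_upperClosure [Preorder α] {s : Set α} {m : α}
    (hm : IsLeast (upperClosure s : Set α) m) : ∃ a, IsLeast s a := by
  obtain ⟨a, ha, ham⟩ := hm.1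
  exact ⟨a, ha, fun x hx => ham.trans (hm.2 (subset_upperClosure hx))⟩

end

theorem stmt_1 {𝓛 : Type*} [SemilatticeInf 𝓛] :
    List.TFAE [
      (∀ C : Set 𝓛, C.Nonempty → IsChain (· ≤ ·) C →
        ∀ S : Set 𝓛, S ⊆ C → S.Nonempty → ∃ m ∈ S, ∀ x ∈ S, m ≤ x),
      (∀ C : Set 𝓛, C.Nonempty → IsChain (· ≤ ·) C → ∃ m ∈ C, ∀ x ∈ C, m ≤ x),
      (∀ M : Set 𝓛, M.Nonempty → (∀ i ∈ M, ∀ j ∈ M, i ⊓ j ∈ M) →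
        ∃ m ∈ M, ∀ x ∈ M, m ≤ x),
      (∀ M : Set 𝓛, M.Nonempty → (∀ i ∈ M, ∀ j ∈ M, i ⊓ j ∈ M) →
        (∀ a ∈ M, ∀ b, a ≤ b → b ∈ M) → ∃ m ∈ M, ∀ x ∈ M, m ≤ x)
    ] := by
  tfae_have 1 → 2 := fun h C hC_ne hC => h C hC_ne hC C subset_rfl hC_ne
  tfae_have 2 → 1 := fun h _ _ hC S hSC hS_ne => h S hS_ne (hC.mono hSC)
  tfae_have 2 → 3 := fun h M hM_ne hM => InfClosed.exists_isLeast h hM hM_ne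
  tfae_have 3 → 4 := fun h M hM_ne hM _ => h M hM_ne hM
  tfae_have 4 → 2 := by
    intro h C hC_ne hC
    obtain ⟨m, hm⟩ := h (upperClosure C) (hC_ne.mono subset_upperClosure)
      (fun _ hi _ hj => hC.infClosed_upperClosure hi hj)
      (fun _ ha _ hab => (upperClosure C).upper hab ha)
    exact IsLeast.exists_isLeast_of_upperClosure hm
  tfae_finish
end

section
/- Let 𝓛₁ and 𝓛₂ be meet-semilattices and let the C*-algebra 𝔄 carry an 𝓛₁-grading (A_i)_{i∈𝓛₁} and an 𝓛₂-grading (B_j)_{j∈𝓛₂}. If the linear span of ⋃_{(i,j)∈𝓛₁×𝓛₂} (A_i ∩ B_j) is dense in 𝔄, then the family (A_i ∩ B_j)_{(i,j)∈𝓛₁×𝓛₂}, indexed by the product semilattice 𝓛₁ × 𝓛₂ (ordered componentwise, so that (i,j) ∧ (k,l) = (i∧k, j∧l)), is an (𝓛₁×𝓛₂)-grading of 𝔄: it is linearly independent, total, and satisfies (A_i ∩ B_j)·(A_k ∩ B_l) ⊆ A_{i∧k} ∩ B_{j∧l} for all i, k ∈ 𝓛₁ and j, l ∈ 𝓛₂.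 -/
/-!
Group a vanishing finite sum of elements `x (i, j) ∈ A i ∩ B j` by the first index: each group
lies in `A i`, so independence of `A` kills every group. Inside the group of a fixed `i` the
summands `x (i, j)` lie in distinct `B j`, so independence of `B` kills each of them.
-/

open Finset

section

variable {ι κ M : Type*} [AddCommMonoid M]

def SumIndependent (A : ι → Set M) : Prop :=
  ∀ (s : Finset ι) (x : ι → M), (∀ i, x i ∈ A i) → ∑ i ∈ s, x i = 0 → ∀ i ∈ s, x i = 0

namespace SumIndependent

theorem sum_fiber_eq_zero {S : Type*} [SetLike S M] [AddSubmonoidClass S M] {A : ι → S}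
    (hA : SumIndependent fun i => (A i : Set M)) [DecidableEq ι] (f : κ → ι) {s : Finset κ}
    {x : κ → M} (hx : ∀ k, x k ∈ A (f k)) (hsum : ∑ k ∈ s, x k = 0) :
    ∀ k ∈ s, ∑ k' ∈ s with f k' = f k, x k' = 0 := by
  intro k hk
  refine hA (s.image f) (fun i => ∑ k' ∈ s with f k' = i, x k') (fun i => ?_) ?_ (f k)
    (mem_image_of_mem f hk)
  · exact sum_mem fun k' hk' => (mem_filter.mp hk').2 ▸ hx k'
  · rw [sum_fiberwise_of_maps_to fun k' hk' => mem_image_of_mem f hk', hsum]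

theorem eq_zero_of_sum_slice_eq_zero {B : κ → Set M} (hB : SumIndependent B)
    [DecidableEq ι] [DecidableEq κ] {s : Finset (ι × κ)} {x : ι × κ → M} (i : ι)
    (hx : ∀ j, x (i, j) ∈ B j)
    (hsum : ∑ q ∈ s with q.1 = i, x q = 0) : ∀ j, (i, j) ∈ s → x (i, j) = 0 := by
  intro j hj
  have hinj : Set.InjOn Prod.snd (({q ∈ s | q.1 = i} : Finset (ι × κ)) : Set (ι × κ)) :=
    fun q hq q' hq' h => Prod.ext ((mem_filter.mp hq).2.trans (mem_filter.mp hq').2.symm) h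
  refine hB ({q ∈ s | q.1 = i}.image Prod.snd) (fun j => x (i, j)) hx ?_ j ?_
  · rw [sum_image hinj, ← hsum]
    exact sum_congr rfl fun q hq => by rw [← (mem_filter.mp hq).2]
  · exact mem_image.mpr ⟨(i, j), mem_filter.mpr ⟨hj, rfl⟩, rfl⟩

theorem prod_inter {S : Type*} [SetLike S M] [AddSubmonoidClass S M] {A : ι → S}
    {B : κ → Set M} (hA : SumIndependent fun i => (A i : Set M)) (hB : SumIndependent B) :
    SumIndependent fun p : ι × κ => (A p.1 : Set M) ∩ B p.2 := by
  classical
  intro s x hx hsum p hp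
  have hfiber := hA.sum_fiber_eq_zero Prod.fst (fun q => (hx q).1) hsum p hp
  exact hB.eq_zero_of_sum_slice_eq_zero p.1 (fun j => (hx (p.1, j)).2) hfiber p.2 hp

end SumIndependent

end

theorem stmt_4_general
    {𝓛₁ 𝓛₂ : Type*} [SemilatticeInf 𝓛₁] [SemilatticeInf 𝓛₂]
    {𝔄 : Type*} [NonUnitalNormedRing 𝔄] [StarRing 𝔄]
    [NormedSpace ℂ 𝔄]
    (A : 𝓛₁ → NonUnitalStarSubalgebra ℂ 𝔄)
    (hA_indep : ∀ (s : Finset 𝓛₁) (x : 𝓛₁ → 𝔄), (∀ i, x i ∈ A i) →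
        ∑ i ∈ s, x i = 0 → ∀ i ∈ s, x i = 0)
    (hA_mul : ∀ i j : 𝓛₁, ∀ x ∈ A i, ∀ y ∈ A j, x * y ∈ A (i ⊓ j))
    (B : 𝓛₂ → NonUnitalStarSubalgebra ℂ 𝔄)
    (hB_indep : ∀ (s : Finset 𝓛₂) (x : 𝓛₂ → 𝔄), (∀ i, x i ∈ B i) →
        ∑ i ∈ s, x i = 0 → ∀ i ∈ s, x i = 0)
    (hB_mul : ∀ i j : 𝓛₂, ∀ x ∈ B i, ∀ y ∈ B j, x * y ∈ B (i ⊓ j))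
    (hdense : closure ((Submodule.span ℂ
        (⋃ p : 𝓛₁ × 𝓛₂, ((A p.1 : Set 𝔄) ∩ (B p.2 : Set 𝔄))) : Submodule ℂ 𝔄) : Set 𝔄)
      = Set.univ) :
    (∀ (s : Finset (𝓛₁ × 𝓛₂)) (x : 𝓛₁ × 𝓛₂ → 𝔄),
        (∀ p : 𝓛₁ × 𝓛₂, x p ∈ (A p.1 : Set 𝔄) ∩ (B p.2 : Set 𝔄)) →
        ∑ p ∈ s, x p = 0 → ∀ p ∈ s, x p = 0) ∧
    (closure ((Submodule.span ℂ
        (⋃ p : 𝓛₁ × 𝓛₂, ((A p.1 : Set 𝔄) ∩ (B p.2 : Set 𝔄))) : Submodule ℂ 𝔄) : Set 𝔄)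
      = Set.univ) ∧
    (∀ (i k : 𝓛₁) (j l : 𝓛₂), ∀ x ∈ (A i : Set 𝔄) ∩ (B j : Set 𝔄),
        ∀ y ∈ (A k : Set 𝔄) ∩ (B l : Set 𝔄),
        x * y ∈ (A (i ⊓ k) : Set 𝔄) ∩ (B (j ⊓ l) : Set 𝔄)) :=
  ⟨SumIndependent.prod_inter (A := A) hA_indep hB_indep, hdense,
    fun i k j l _ hx _ hy => ⟨hA_mul i k _ hx.1 _ hy.1, hB_mul j l _ hx.2 _ hy.2⟩⟩

theorem stmt_4
    {𝓛₁ 𝓛₂ : Type*} [SemilatticeInf 𝓛₁] [SemilatticeInf 𝓛₂]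
    {𝔄 : Type*} [NonUnitalNormedRing 𝔄] [StarRing 𝔄] [CStarRing 𝔄]
    [NormedSpace ℂ 𝔄] [IsScalarTower ℂ 𝔄 𝔄] [SMulCommClass ℂ 𝔄 𝔄]
    [StarModule ℂ 𝔄] [CompleteSpace 𝔄]
    (A : 𝓛₁ → NonUnitalStarSubalgebra ℂ 𝔄)
    (hA_closed : ∀ i : 𝓛₁, IsClosed ((A i : Set 𝔄)))
    (hA_indep : ∀ (s : Finset 𝓛₁) (x : 𝓛₁ → 𝔄), (∀ i, x i ∈ A i) →
        ∑ i ∈ s, x i = 0 → ∀ i ∈ s, x i = 0)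
    (hA_total : closure ((Submodule.span ℂ (⋃ i : 𝓛₁, (A i : Set 𝔄)) : Submodule ℂ 𝔄) : Set 𝔄) = Set.univ)
    (hA_mul : ∀ i j : 𝓛₁, ∀ x ∈ A i, ∀ y ∈ A j, x * y ∈ A (i ⊓ j))
    (B : 𝓛₂ → NonUnitalStarSubalgebra ℂ 𝔄)
    (hB_closed : ∀ i : 𝓛₂, IsClosed ((B i : Set 𝔄)))
    (hB_indep : ∀ (s : Finset 𝓛₂) (x : 𝓛₂ → 𝔄), (∀ i, x i ∈ B i) →
        ∑ i ∈ s, x i = 0 → ∀ i ∈ s, x i = 0)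
    (hB_total : closure ((Submodule.span ℂ (⋃ i : 𝓛₂, (B i : Set 𝔄)) : Submodule ℂ 𝔄) : Set 𝔄) = Set.univ)
    (hB_mul : ∀ i j : 𝓛₂, ∀ x ∈ B i, ∀ y ∈ B j, x * y ∈ B (i ⊓ j))
    (hdense : closure ((Submodule.span ℂ
        (⋃ p : 𝓛₁ × 𝓛₂, ((A p.1 : Set 𝔄) ∩ (B p.2 : Set 𝔄))) : Submodule ℂ 𝔄) : Set 𝔄)
      = Set.univ) :
    (∀ (s : Finset (𝓛₁ × 𝓛₂)) (x : 𝓛₁ × 𝓛₂ → 𝔄),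
        (∀ p : 𝓛₁ × 𝓛₂, x p ∈ (A p.1 : Set 𝔄) ∩ (B p.2 : Set 𝔄)) →
        ∑ p ∈ s, x p = 0 → ∀ p ∈ s, x p = 0) ∧
    (closure ((Submodule.span ℂ
        (⋃ p : 𝓛₁ × 𝓛₂, ((A p.1 : Set 𝔄) ∩ (B p.2 : Set 𝔄))) : Submodule ℂ 𝔄) : Set 𝔄)
      = Set.univ) ∧
    (∀ (i k : 𝓛₁) (j l : 𝓛₂), ∀ x ∈ (A i : Set 𝔄) ∩ (B j : Set 𝔄),
        ∀ y ∈ (A k : Set 𝔄) ∩ (B l : Set 𝔄),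
        x * y ∈ (A (i ⊓ k) : Set 𝔄) ∩ (B (j ⊓ l) : Set 𝔄)) :=
  stmt_4_general A hA_indep hA_mul B hB_indep hB_mul hdense
end

section
/- Let (𝔄,(A_i)_{i∈𝓛}) be an 𝓛-graded C*-algebra. Then 𝔄 is commutative if and only if A_i is commutative for every i ∈ 𝓛. -/
/-!
For selfadjoint `s ∈ A i` and `c ∈ A j`, the product `s * s * c` and its adjoint `c * s * s` both
lie in the commutative component `A (i ⊓ j)`, so `s * s * c` is normal. Its quasispectrum is that
of the selfadjoint `s * c * s`, hence real, so `s * s * c` is selfadjoint, i.e. `s * s` commutes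
with `c`. Squares of selfadjoint elements span each (closed) component, so any two components
commute elementwise, and by totality the whole algebra is commutative.
-/

open Submodule

section Commute

variable {R M : Type*} [CommSemiring R] [NonUnitalNonAssocSemiring M] [Module R M]
  [IsScalarTower R M M] [SMulCommClass R M M]

theorem Submodule.commute_of_mem_span {S T : Set M} (h : ∀ x ∈ S, ∀ y ∈ T, Commute x y)
    {x y : M} (hx : x ∈ span R S) (hy : y ∈ span R T) : Commute x y := by
  induction hx using span_induction with
  | mem x hx =>
    induction hy using span_induction with
    | mem y hy => exact h x hx y hy
    | zero => exact Commute.zero_right x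
    | add y z _ _ hy hz => exact hy.add_right hz
    | smul r y _ hy => exact hy.smul_right r
  | zero => exact Commute.zero_left y
  | add x z _ _ hx hz => exact hx.add_left hz
  | smul r x _ hx => exact hx.smul_left r

variable [TopologicalSpace M] [ContinuousMul M] [T2Space M]

theorem commute_of_dense_span {S : Set M} (h : ∀ x ∈ S, ∀ y ∈ S, Commute x y)
    (hS : Dense (span R S : Set M)) (x y : M) : Commute x y := by
  have hclosed : IsClosed {p : M × M | Commute p.1 p.2} :=
    isClosed_eq continuous_mul (continuous_mul.comp continuous_swap)
  have hspan : (span R S : Set M) ×ˢ (span R S : Set M) ⊆ {p : M × M | Commute p.1 p.2} :=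
    fun p hp => commute_of_mem_span h hp.1 hp.2
  have hxy : (x, y) ∈ closure ((span R S : Set M) ×ˢ (span R S : Set M)) := by
    simp [closure_prod_eq, hS.closure_eq]
  exact closure_minimal hspan hclosed hxy

end Commute

section CStarAlgebra

variable {B : Type*} [NonUnitalCStarAlgebra B]

theorem CStarAlgebra.span_mul_self_of_isSelfAdjoint :
    span ℂ {x : B | ∃ s, IsSelfAdjoint s ∧ s * s = x} = ⊤ := by
  let _ := CStarAlgebra.spectralOrder B
  let _ := CStarAlgebra.spectralOrderedRing B
  refine eq_top_iff.mpr (CStarAlgebra.span_nonneg (A := B) ▸ span_mono ?_)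
  intro a ha
  exact ⟨CFC.sqrt a, (CFC.sqrt_nonneg a).isSelfAdjoint, CFC.sqrt_mul_sqrt_self a ha⟩

theorem NonUnitalStarSubalgebra.mem_span_mul_self_of_isSelfAdjoint
    (S : NonUnitalStarSubalgebra ℂ B) [IsClosed (S : Set B)] {x : B} (hx : x ∈ S) :
    x ∈ span ℂ {y : B | ∃ s ∈ S, IsSelfAdjoint s ∧ s * s = y} := by
  have hx' : (⟨x, hx⟩ : S) ∈ span ℂ {y : S | ∃ s, IsSelfAdjoint s ∧ s * s = y} := by
    rw [CStarAlgebra.span_mul_self_of_isSelfAdjoint]; exact mem_top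
  refine span_mono ?_ (apply_mem_span_image_of_mem_span S.toNonUnitalSubalgebra.toSubmodule.subtype hx')
  rintro _ ⟨_, ⟨s, hs, rfl⟩, rfl⟩
  exact ⟨s, s.2, congrArg Subtype.val hs, rfl⟩

theorem IsSelfAdjoint.commute_mul_self_of_isStarNormal {s c : B} (hs : IsSelfAdjoint s)
    (hc : IsSelfAdjoint c) (h : IsStarNormal (s * s * c)) : Commute (s * s) c := by
  have hreal : QuasispectrumRestricts (s * s * c) Complex.reCLM := by
    rw [mul_assoc]
    exact (hc.conjugate_self hs).quasispectrumRestricts.mul_comm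
  calc s * s * c = star (s * s * c) := (hreal.isSelfAdjoint _).star_eq.symm
    _ = c * (s * s) := by simp only [star_mul, hs.star_eq, hc.star_eq, mul_assoc]

end CStarAlgebra

theorem stmt_14_general
    {𝓛 : Type*} [SemilatticeInf 𝓛]
    {𝔄 : Type*} [NonUnitalNormedRing 𝔄] [StarRing 𝔄] [CStarRing 𝔄]
    [NormedSpace ℂ 𝔄] [IsScalarTower ℂ 𝔄 𝔄] [SMulCommClass ℂ 𝔄 𝔄]
    [StarModule ℂ 𝔄] [CompleteSpace 𝔄]
    (A : 𝓛 → NonUnitalStarSubalgebra ℂ 𝔄)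
    (hA_closed : ∀ i : 𝓛, IsClosed ((A i : Set 𝔄)))
    (hA_total : closure ((Submodule.span ℂ (⋃ i : 𝓛, (A i : Set 𝔄)) : Submodule ℂ 𝔄) : Set 𝔄) = Set.univ)
    (hA_mul : ∀ i j : 𝓛, ∀ x ∈ A i, ∀ y ∈ A j, x * y ∈ A (i ⊓ j)) :
    (∀ x y : 𝔄, x * y = y * x) ↔ (∀ i : 𝓛, ∀ x ∈ A i, ∀ y ∈ A i, x * y = y * x) := by
  refine ⟨fun h i x _ y _ => h x y, fun hcomm => ?_⟩
  let _ : NonUnitalCStarAlgebra 𝔄 := { }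
  have hsquare : ∀ i j, ∀ s ∈ A i, ∀ c ∈ A j, IsSelfAdjoint s → IsSelfAdjoint c →
      Commute (s * s) c := by
    intro i j s hs c hc hs_sa hc_sa
    have hmem : s * s * c ∈ A (i ⊓ j) := hA_mul i j _ (mul_mem hs hs) c hc
    exact hs_sa.commute_mul_self_of_isStarNormal hc_sa ⟨hcomm _ _ (star_mem hmem) _ hmem⟩
  have hcomponents : ∀ i j, ∀ x ∈ A i, ∀ y ∈ A j, Commute x y := by
    intro i j x hx y hy
    have := hA_closed i
    have := hA_closed j
    refine commute_of_mem_span ?_ ((A i).mem_span_mul_self_of_isSelfAdjoint hx)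
      ((A j).mem_span_mul_self_of_isSelfAdjoint hy)
    rintro _ ⟨s, hs, hs_sa, rfl⟩ _ ⟨t, ht, ht_sa, rfl⟩
    exact hsquare i j s hs (t * t) (mul_mem ht ht) hs_sa
      (by simpa only [ht_sa.star_eq] using IsSelfAdjoint.star_mul_self t)
  refine fun x y => commute_of_dense_span (R := ℂ) ?_ (dense_iff_closure_eq.mpr hA_total) x y
  simp only [Set.mem_iUnion, SetLike.mem_coe]
  rintro x ⟨i, hx⟩ y ⟨j, hy⟩
  exact hcomponents i j x hx y hy

theorem stmt_14
    {𝓛 : Type*} [SemilatticeInf 𝓛]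
    {𝔄 : Type*} [NonUnitalNormedRing 𝔄] [StarRing 𝔄] [CStarRing 𝔄]
    [NormedSpace ℂ 𝔄] [IsScalarTower ℂ 𝔄 𝔄] [SMulCommClass ℂ 𝔄 𝔄]
    [StarModule ℂ 𝔄] [CompleteSpace 𝔄]
    (A : 𝓛 → NonUnitalStarSubalgebra ℂ 𝔄)
    (hA_closed : ∀ i : 𝓛, IsClosed ((A i : Set 𝔄)))
    (hA_indep : ∀ (s : Finset 𝓛) (x : 𝓛 → 𝔄), (∀ i, x i ∈ A i) →
        ∑ i ∈ s, x i = 0 → ∀ i ∈ s, x i = 0)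
    (hA_total : closure ((Submodule.span ℂ (⋃ i : 𝓛, (A i : Set 𝔄)) : Submodule ℂ 𝔄) : Set 𝔄) = Set.univ)
    (hA_mul : ∀ i j : 𝓛, ∀ x ∈ A i, ∀ y ∈ A j, x * y ∈ A (i ⊓ j)) :
    (∀ x y : 𝔄, x * y = y * x) ↔ (∀ i : 𝓛, ∀ x ∈ A i, ∀ y ∈ A i, x * y = y * x) :=
  stmt_14_general A hA_closed hA_total hA_mul
end

section
/- Let 𝓛 be a good meet-semilattice (every nonempty subset of 𝓛 closed under ∧ has a least element) and (𝔄,(A_i)_{i∈𝓛}) an 𝓛-graded commutative C*-algebra. Let χ : 𝔄 → ℂ be a character (a nonzero continuous algebra homomorphism). Then the set S = {i ∈ 𝓛 : χ does not vanish identically on A_i} is nonempty, closed under ∧, and has a least element i₀; χ vanishes on A_j for every j ∈ 𝓛 with ¬(i₀ ≤ j); and χ is determined by its restriction to A_{i₀}: if χ' is another character of 𝔄 that agrees with χ on A_{i₀} and vanishes on A_j for every j with ¬(i₀ ≤ j), then χ' = χ. -/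
/-!
A character `χ` is multiplicative, so the components on which it does not vanish are closed
under `⊓`; goodness of `𝓛` provides the least such index `i₀`, and `χ` vanishes on `A j` unless
`i₀ ≤ j`. If `i₀ ≤ i`, then `A i₀ * A i ⊆ A i₀`, so for a fixed `a ∈ A i₀` with `χ a ≠ 0` the
value `χ x = χ (a * x) / χ a` on `A i` is determined by `χ` on `A i₀`. Hence two such characters
agree on every component, and by continuity on the dense span of the components.
-/

open Set

theorem NonUnitalAlgHom.ext_of_dense_span {R A B : Type*} [CommSemiring R]
    [NonUnitalNonAssocSemiring A] [Module R A] [TopologicalSpace A]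
    [NonUnitalNonAssocSemiring B] [Module R B] [TopologicalSpace B] [T2Space B]
    {s : Set A} (hs : Dense (Submodule.span R s : Set A)) {f g : A →ₙₐ[R] B}
    (hf : Continuous f) (hg : Continuous g) (h : EqOn f g s) : f = g :=
  ext fun x =>
    (LinearMap.eqOn_span' (f := (f : A →ₗ[R] B)) (g := (g : A →ₗ[R] B)) h).closure hf hg (hs x)

section GradedCharacter

variable {𝓛 𝕜 𝔄 : Type*} [Field 𝕜] [NonUnitalNonAssocSemiring 𝔄] [Module 𝕜 𝔄]
  {A : 𝓛 → Set 𝔄}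

def gradedSupport (A : 𝓛 → Set 𝔄) (χ : 𝔄 →ₙₐ[𝕜] 𝕜) : Set 𝓛 :=
  {i | ∃ x ∈ A i, χ x ≠ 0}

theorem gradedSupport_nonempty [TopologicalSpace 𝕜] [T2Space 𝕜] [TopologicalSpace 𝔄]
    (hA_dense : Dense (Submodule.span 𝕜 (⋃ i, A i) : Set 𝔄))
    {χ : 𝔄 →ₙₐ[𝕜] 𝕜} (hχ_cont : Continuous χ) (hχ_ne : χ ≠ 0) :
    (gradedSupport A χ).Nonempty := by
  by_contra hempty
  refine hχ_ne (NonUnitalAlgHom.ext_of_dense_span hA_dense hχ_cont continuous_const ?_)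
  intro x hx
  obtain ⟨i, hx⟩ := mem_iUnion.mp hx
  by_contra hχx
  exact hempty ⟨i, x, hx, hχx⟩

variable [SemilatticeInf 𝓛]

theorem inf_mem_gradedSupport (hA_mul : ∀ i j, ∀ x ∈ A i, ∀ y ∈ A j, x * y ∈ A (i ⊓ j))
    {χ : 𝔄 →ₙₐ[𝕜] 𝕜} {i j : 𝓛} (hi : i ∈ gradedSupport A χ) (hj : j ∈ gradedSupport A χ) :
    i ⊓ j ∈ gradedSupport A χ := by
  obtain ⟨x, hx, hχx⟩ := hi
  obtain ⟨y, hy, hχy⟩ := hj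
  exact ⟨x * y, hA_mul i j x hx y hy, by simpa [map_mul] using ⟨hχx, hχy⟩⟩

theorem map_eq_zero_of_not_le {χ : 𝔄 →ₙₐ[𝕜] 𝕜} {i₀ j : 𝓛}
    (hi₀ : i₀ ∈ lowerBounds (gradedSupport A χ)) (hj : ¬ i₀ ≤ j) {x : 𝔄} (hx : x ∈ A j) :
    χ x = 0 := by
  by_contra hχx
  exact hj (hi₀ ⟨x, hx, hχx⟩)

theorem eqOn_of_eqOn_of_le (hA_mul : ∀ i j, ∀ x ∈ A i, ∀ y ∈ A j, x * y ∈ A (i ⊓ j))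
    {χ χ' : 𝔄 →ₙₐ[𝕜] 𝕜} {i₀ i : 𝓛} (hi₀ : i₀ ∈ gradedSupport A χ)
    (hagree : EqOn χ' χ (A i₀)) (hle : i₀ ≤ i) : EqOn χ' χ (A i) := by
  intro x hx
  obtain ⟨a, ha, hχa⟩ := hi₀
  have hax : a * x ∈ A i₀ := by simpa [inf_eq_left.mpr hle] using hA_mul i₀ i a ha x hx
  refine mul_left_cancel₀ hχa ?_
  calc χ a * χ' x = χ' (a * x) := by rw [map_mul, hagree ha]
    _ = χ (a * x) := hagree hax
    _ = χ a * χ x := map_mul χ a x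

theorem eqOn_iUnion_of_isLeast (hA_mul : ∀ i j, ∀ x ∈ A i, ∀ y ∈ A j, x * y ∈ A (i ⊓ j))
    {χ χ' : 𝔄 →ₙₐ[𝕜] 𝕜} {i₀ : 𝓛} (hi₀ : IsLeast (gradedSupport A χ) i₀)
    (hagree : EqOn χ' χ (A i₀)) (hvan : ∀ j, ¬ i₀ ≤ j → ∀ x ∈ A j, χ' x = 0) :
    EqOn χ' χ (⋃ i, A i) := by
  intro x hx
  obtain ⟨i, hx⟩ := mem_iUnion.mp hx
  by_cases hle : i₀ ≤ i
  · exact eqOn_of_eqOn_of_le hA_mul hi₀.1 hagree hle hx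
  · rw [hvan i hle x hx, map_eq_zero_of_not_le hi₀.2 hle hx]

theorem eq_of_eqOn_isLeast [TopologicalSpace 𝕜] [T2Space 𝕜] [TopologicalSpace 𝔄]
    (hA_dense : Dense (Submodule.span 𝕜 (⋃ i, A i) : Set 𝔄))
    (hA_mul : ∀ i j, ∀ x ∈ A i, ∀ y ∈ A j, x * y ∈ A (i ⊓ j))
    {χ χ' : 𝔄 →ₙₐ[𝕜] 𝕜} (hχ_cont : Continuous χ) (hχ'_cont : Continuous χ')
    {i₀ : 𝓛} (hi₀ : IsLeast (gradedSupport A χ) i₀) (hagree : EqOn χ' χ (A i₀))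
    (hvan : ∀ j, ¬ i₀ ≤ j → ∀ x ∈ A j, χ' x = 0) : χ' = χ :=
  NonUnitalAlgHom.ext_of_dense_span hA_dense hχ'_cont hχ_cont
    (eqOn_iUnion_of_isLeast hA_mul hi₀ hagree hvan)

end GradedCharacter

theorem stmt_15_general
    {𝓛 : Type*} [SemilatticeInf 𝓛]
    {𝔄 : Type*} [NonUnitalNormedRing 𝔄] [StarRing 𝔄]
    [NormedSpace ℂ 𝔄]
    (A : 𝓛 → NonUnitalStarSubalgebra ℂ 𝔄)
    (hA_total : closure ((Submodule.span ℂ (⋃ i : 𝓛, (A i : Set 𝔄)) : Submodule ℂ 𝔄) : Set 𝔄) = Set.univ)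
    (hA_mul : ∀ i j : 𝓛, ∀ x ∈ A i, ∀ y ∈ A j, x * y ∈ A (i ⊓ j))
    (hgood : ∀ M : Set 𝓛, M.Nonempty → (∀ i ∈ M, ∀ j ∈ M, i ⊓ j ∈ M) →
        ∃ m ∈ M, ∀ x ∈ M, m ≤ x)
    (χ : 𝔄 →ₙₐ[ℂ] ℂ) (hχ_cont : Continuous χ) (hχ_ne : χ ≠ 0) :
    ({i : 𝓛 | ∃ x ∈ A i, χ x ≠ 0}.Nonempty) ∧
    (∀ i ∈ {i : 𝓛 | ∃ x ∈ A i, χ x ≠ 0}, ∀ j ∈ {i : 𝓛 | ∃ x ∈ A i, χ x ≠ 0},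
        i ⊓ j ∈ {i : 𝓛 | ∃ x ∈ A i, χ x ≠ 0}) ∧
    (∃ i₀ ∈ {i : 𝓛 | ∃ x ∈ A i, χ x ≠ 0},
      (∀ i ∈ {i : 𝓛 | ∃ x ∈ A i, χ x ≠ 0}, i₀ ≤ i) ∧
      (∀ j : 𝓛, ¬ i₀ ≤ j → ∀ x ∈ A j, χ x = 0) ∧
      (∀ χ' : 𝔄 →ₙₐ[ℂ] ℂ, Continuous χ' → χ' ≠ 0 →
        (∀ x ∈ A i₀, χ' x = χ x) →
        (∀ j : 𝓛, ¬ i₀ ≤ j → ∀ x ∈ A j, χ' x = 0) → χ' = χ)) := by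
  have hA_dense : Dense (Submodule.span ℂ (⋃ i, (A i : Set 𝔄)) : Set 𝔄) :=
    dense_iff_closure_eq.mpr hA_total
  have hne : (gradedSupport (fun i ↦ (A i : Set 𝔄)) χ).Nonempty :=
    gradedSupport_nonempty hA_dense hχ_cont hχ_ne
  have hinf : ∀ i ∈ gradedSupport (fun i ↦ (A i : Set 𝔄)) χ, ∀ j ∈ gradedSupport _ χ,
      i ⊓ j ∈ gradedSupport (fun i ↦ (A i : Set 𝔄)) χ :=
    fun i hi j hj ↦ inf_mem_gradedSupport hA_mul hi hj
  obtain ⟨i₀, hi₀, hi₀_min⟩ := hgood _ hne hinf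
  have hleast : IsLeast (gradedSupport (fun i ↦ (A i : Set 𝔄)) χ) i₀ := ⟨hi₀, hi₀_min⟩
  refine ⟨hne, hinf, i₀, hi₀, hi₀_min, fun j hj x hx ↦ map_eq_zero_of_not_le hi₀_min hj hx, ?_⟩
  intro χ' hχ'_cont _ hagree hvan
  exact eq_of_eqOn_isLeast hA_dense hA_mul hχ_cont hχ'_cont hleast (fun x hx ↦ hagree x hx) hvan

theorem stmt_15
    {𝓛 : Type*} [SemilatticeInf 𝓛]
    {𝔄 : Type*} [NonUnitalNormedRing 𝔄] [StarRing 𝔄] [CStarRing 𝔄]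
    [NormedSpace ℂ 𝔄] [IsScalarTower ℂ 𝔄 𝔄] [SMulCommClass ℂ 𝔄 𝔄]
    [StarModule ℂ 𝔄] [CompleteSpace 𝔄]
    (A : 𝓛 → NonUnitalStarSubalgebra ℂ 𝔄)
    (hA_closed : ∀ i : 𝓛, IsClosed ((A i : Set 𝔄)))
    (hA_indep : ∀ (s : Finset 𝓛) (x : 𝓛 → 𝔄), (∀ i, x i ∈ A i) →
        ∑ i ∈ s, x i = 0 → ∀ i ∈ s, x i = 0)
    (hA_total : closure ((Submodule.span ℂ (⋃ i : 𝓛, (A i : Set 𝔄)) : Submodule ℂ 𝔄) : Set 𝔄) = Set.univ)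
    (hA_mul : ∀ i j : 𝓛, ∀ x ∈ A i, ∀ y ∈ A j, x * y ∈ A (i ⊓ j))
    (hgood : ∀ M : Set 𝓛, M.Nonempty → (∀ i ∈ M, ∀ j ∈ M, i ⊓ j ∈ M) →
        ∃ m ∈ M, ∀ x ∈ M, m ≤ x)
    (hcomm : ∀ x y : 𝔄, x * y = y * x)
    (χ : 𝔄 →ₙₐ[ℂ] ℂ) (hχ_cont : Continuous χ) (hχ_ne : χ ≠ 0) :
    ({i : 𝓛 | ∃ x ∈ A i, χ x ≠ 0}.Nonempty) ∧
    (∀ i ∈ {i : 𝓛 | ∃ x ∈ A i, χ x ≠ 0}, ∀ j ∈ {i : 𝓛 | ∃ x ∈ A i, χ x ≠ 0},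
        i ⊓ j ∈ {i : 𝓛 | ∃ x ∈ A i, χ x ≠ 0}) ∧
    (∃ i₀ ∈ {i : 𝓛 | ∃ x ∈ A i, χ x ≠ 0},
      (∀ i ∈ {i : 𝓛 | ∃ x ∈ A i, χ x ≠ 0}, i₀ ≤ i) ∧
      (∀ j : 𝓛, ¬ i₀ ≤ j → ∀ x ∈ A j, χ x = 0) ∧
      (∀ χ' : 𝔄 →ₙₐ[ℂ] ℂ, Continuous χ' → χ' ≠ 0 →
        (∀ x ∈ A i₀, χ' x = χ x) →
        (∀ j : 𝓛, ¬ i₀ ≤ j → ∀ x ∈ A j, χ' x = 0) → χ' = χ)) :=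
  stmt_15_general A hA_total hA_mul hgood χ hχ_cont hχ_ne
end

section
/- Let G be a locally compact Hausdorff topological group and H, K closed subgroups of G. The following are equivalent: (ii) the injective continuous map q : G/(H∩K) → G/H × G/K sending the coset g(H∩K) to (gH, gK) is a closed map; (iii) the set HK = {hk : h ∈ H, k ∈ K} is closed in G and the multiplication map H × K → HK, (h,k) ↦ hk, is open onto HK equipped with the subspace topology; (iv) the image p_H(K) of K under the quotient map p_H : G → G/H is closed in G/H and the restricted map K → p_H(K), k ↦ kH, is open onto p_H(K) equipped with the subspace topology; (v) the image p_K(H) of H in G/K is closed and the restricted map H → p_K(H), h ↦ hK, is open onto p_K(H). -/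
/-!
Since `q` is continuous and injective, it is a closed map iff it is a closed embedding, i.e. iff
it is inducing with closed range. The range of `q` pulls back to `{(x, y) | x⁻¹ y ∈ HK}` in
`G × G` and `p_H(K)` pulls back to `KH = (HK)⁻¹` in `G`, so the closedness conditions agree.
All openness conditions amount to solving `x = h k` locally: every `x ∈ HK` close to `h₀ k₀` is
a product `h k` with `h` close to `h₀` and `k` close to `k₀`.
-/

open scoped Pointwise
open Filter Set Topology

namespace Subgroup

variable {G : Type*} [Group G]

def prodMul (A B : Subgroup G) : A × B → ((A : Set G) * (B : Set G) : Set G) :=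
  fun p => ⟨p.1 * p.2, Set.mul_mem_mul p.1.2 p.2.2⟩

def quotientInfToProd (A B : Subgroup G) : G ⧸ (A ⊓ B) → (G ⧸ A) × (G ⧸ B) :=
  fun x => (quotientMapOfLE inf_le_left x, quotientMapOfLE inf_le_right x)

variable {A B : Subgroup G}

@[simp]
theorem quotientInfToProd_apply_mk (g : G) :
    quotientInfToProd A B g = ((g : G ⧸ A), (g : G ⧸ B)) :=
  rfl

theorem injective_quotientInfToProd : Function.Injective (quotientInfToProd A B) := by
  intro x y hxy
  obtain ⟨g, rfl⟩ := QuotientGroup.mk_surjective x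
  obtain ⟨g', rfl⟩ := QuotientGroup.mk_surjective y
  rw [quotientInfToProd_apply_mk, quotientInfToProd_apply_mk, Prod.mk.injEq, QuotientGroup.eq,
    QuotientGroup.eq] at hxy
  exact QuotientGroup.eq.2 (mem_inf.2 hxy)

theorem preimage_range_quotientInfToProd :
    Prod.map QuotientGroup.mk QuotientGroup.mk ⁻¹' range (quotientInfToProd A B) =
      (fun p : G × G => p.1⁻¹ * p.2) ⁻¹' ((A : Set G) * (B : Set G)) := by
  ext ⟨x, y⟩
  simp only [mem_preimage, Prod.map_apply, mem_range]
  constructor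
  · rintro ⟨z, hz⟩
    obtain ⟨g, rfl⟩ := QuotientGroup.mk_surjective z
    rw [quotientInfToProd_apply_mk, Prod.mk.injEq, QuotientGroup.eq, QuotientGroup.eq] at hz
    exact ⟨x⁻¹ * g, by simpa using A.inv_mem hz.1, g⁻¹ * y, hz.2, by group⟩
  · rintro ⟨a, ha, b, hb, hab⟩
    refine ⟨(x * a : G), ?_⟩
    rw [quotientInfToProd_apply_mk, Prod.mk.injEq, QuotientGroup.eq, QuotientGroup.eq]
    refine ⟨by simpa using A.inv_mem ha, ?_⟩
    rwa [mul_inv_rev, mul_assoc, ← hab, inv_mul_cancel_left]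

variable [TopologicalSpace G]

theorem isClosed_image_mk_iff :
    IsClosed ((QuotientGroup.mk : G → G ⧸ B) '' (A : Set G)) ↔
      IsClosed ((A : Set G) * (B : Set G)) := by
  rw [← (QuotientGroup.isQuotientMap_mk B).isClosed_preimage,
    QuotientGroup.preimage_image_mk_eq_mul]

theorem isOpenMap_prodMul_iff : IsOpenMap (prodMul A B) ↔
    ∀ a ∈ A, ∀ b ∈ B, ∀ U ∈ 𝓝 a, ∀ V ∈ 𝓝 b,
      ∀ᶠ x in 𝓝 (a * b), x ∈ (A : Set G) * (B : Set G) →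
        x ∈ ((A : Set G) ∩ U) * ((B : Set G) ∩ V) := by
  constructor
  · intro h a ha b hb U hU V hV
    have hUV : (Subtype.val ⁻¹' U) ×ˢ (Subtype.val ⁻¹' V) ∈ 𝓝 ((⟨a, ha⟩, ⟨b, hb⟩) : A × B) :=
      prod_mem_nhds (continuous_subtype_val.continuousAt hU)
        (continuous_subtype_val.continuousAt hV)
    obtain ⟨W, hW, hWsub⟩ := (mem_nhds_subtype _ _ _).1 (h.image_mem_nhds hUV)
    filter_upwards [hW] with x hxW hxAB
    obtain ⟨⟨a', b'⟩, ⟨ha'U, hb'V⟩, hx⟩ := hWsub (a := ⟨x, hxAB⟩) hxW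
    exact ⟨a', ⟨a'.2, ha'U⟩, b', ⟨b'.2, hb'V⟩, congrArg Subtype.val hx⟩
  · intro h
    rw [isOpenMap_iff_nhds_le]
    rintro ⟨a, b⟩ s hs
    rw [Filter.mem_map, nhds_prod_eq, nhds_subtype, nhds_subtype] at hs
    obtain ⟨U', ⟨U, hU, hUU'⟩, V', ⟨V, hV, hVV'⟩, hsub⟩ := mem_prod_iff.1 hs
    refine (mem_nhds_subtype _ _ _).2 ⟨_, h a a.2 b b.2 U hU V hV, fun x hx => ?_⟩
    obtain ⟨a', ⟨ha'A, ha'U⟩, b', ⟨hb'B, hb'V⟩, hab⟩ := hx x.2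
    have : prodMul A B (⟨a', ha'A⟩, ⟨b', hb'B⟩) ∈ s := hsub ⟨hUU' ha'U, hVV' hb'V⟩
    rwa [show prodMul A B (⟨a', ha'A⟩, ⟨b', hb'B⟩) = x from Subtype.ext hab] at this

theorem continuous_quotientInfToProd : Continuous (quotientInfToProd A B) :=
  (QuotientGroup.isQuotientMap_mk _).continuous_iff.2 <|
    QuotientGroup.continuous_mk.prodMk QuotientGroup.continuous_mk

theorem isClosed_coe_mul_comm [ContinuousInv G] :
    IsClosed ((A : Set G) * (B : Set G)) ↔ IsClosed ((B : Set G) * (A : Set G)) :=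
  ⟨fun h => by simpa [mul_inv_rev] using h.inv, fun h => by simpa [mul_inv_rev] using h.inv⟩

variable [IsTopologicalGroup G]

theorem isClosed_range_quotientInfToProd_iff :
    IsClosed (range (quotientInfToProd A B)) ↔ IsClosed ((A : Set G) * (B : Set G)) := by
  have hπ := (QuotientGroup.isOpenQuotientMap_mk (N := A)).prodMap
    (QuotientGroup.isOpenQuotientMap_mk (N := B))
  have hdiv : IsQuotientMap fun p : G × G => p.1⁻¹ * p.2 :=
    .of_inverse (f := fun y => (1, y)) (by fun_prop) (by fun_prop) fun y => by simp
  rw [← hπ.isQuotientMap.isClosed_preimage, preimage_range_quotientInfToProd,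
    hdiv.isClosed_preimage]

theorem isOpenMap_prodMul_swap (h : IsOpenMap (prodMul A B)) : IsOpenMap (prodMul B A) := by
  rw [isOpenMap_prodMul_iff] at h ⊢
  intro b hb a ha V hV U hU
  have hinv := h a⁻¹ (A.inv_mem ha) b⁻¹ (B.inv_mem hb)
    U⁻¹ (nhds_inv (a := a) ▸ Filter.inv_mem_inv hU) V⁻¹ (nhds_inv (a := b) ▸ Filter.inv_mem_inv hV)
  rw [← mul_inv_rev] at hinv
  filter_upwards [(continuous_inv.tendsto (b * a)).eventually hinv] with x hx hxBA
  have := hx (by simpa [mul_inv_rev, inv_coe_set] using Set.inv_mem_inv.2 hxBA)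
  simpa [mul_inv_rev, inv_coe_set, Set.inter_inv] using Set.inv_mem_inv.2 this

theorem isOpenMap_imageFactorization_of_prodMul (h : IsOpenMap (prodMul A B)) :
    IsOpenMap ((A : Set G).imageFactorization (QuotientGroup.mk : G → G ⧸ B)) := by
  intro U hU
  -- `AB` is the saturated set `p_B⁻¹ (p_B A)`, on which `p_B` is still open
  have hfactor : (A : Set G).imageFactorization (QuotientGroup.mk : G → G ⧸ B) ∘ Prod.fst =
      ((QuotientGroup.mk : G → G ⧸ B) '' A).restrictPreimage QuotientGroup.mk ∘
        Homeomorph.setCongr (QuotientGroup.preimage_image_mk_eq_mul B A).symm ∘ prodMul A B := by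
    funext p
    exact Subtype.ext (QuotientGroup.mk_mul_of_mem _ p.2.2).symm
  have hopen := hfactor ▸ (QuotientGroup.isOpenMap_coe.restrictPreimage _).comp
    ((Homeomorph.setCongr _).isOpenMap.comp h)
  have := hopen _ (hU.prod isOpen_univ)
  rwa [image_comp, fst_image_prod U univ_nonempty] at this

theorem isOpenMap_prodMul_of_imageFactorization
    (h : IsOpenMap ((A : Set G).imageFactorization (QuotientGroup.mk : G → G ⧸ B))) :
    IsOpenMap (prodMul A B) := by
  rw [isOpenMap_prodMul_iff]
  intro a ha b hb U hU V hV
  have hdiv : ∀ᶠ p in 𝓝 (a, a * b), p.1⁻¹ * p.2 ∈ V :=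
    (continuous_fst.inv.mul continuous_snd).continuousAt.preimage_mem_nhds
      (f := fun p : G × G => p.1⁻¹ * p.2) (by rwa [inv_mul_cancel_left])
  obtain ⟨U', hU', W, hW, hU'W⟩ := mem_nhds_prod_iff.1 hdiv
  have hr := h.image_mem_nhds
    (continuous_subtype_val.continuousAt.preimage_mem_nhds (x := ⟨a, ha⟩) (inter_mem hU hU'))
  obtain ⟨O, hO, hOsub⟩ := (mem_nhds_subtype _ _ _).1 hr
  have hmk : (QuotientGroup.mk : G → G ⧸ B) ⁻¹' O ∈ 𝓝 (a * b) :=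
    QuotientGroup.continuous_mk.continuousAt.preimage_mem_nhds
      (by rwa [QuotientGroup.mk_mul_of_mem a hb])
  filter_upwards [hW, hmk] with x hxW hxO hxAB
  have hx : (x : G ⧸ B) ∈ (QuotientGroup.mk : G → G ⧸ B) '' A := by
    rwa [← mem_preimage, QuotientGroup.preimage_image_mk_eq_mul]
  obtain ⟨⟨a', ha'A⟩, ⟨ha'U, ha'U'⟩, ha'x⟩ := hOsub (a := ⟨_, hx⟩) hxO
  refine ⟨a', ⟨ha'A, ha'U⟩, a'⁻¹ * x, ⟨QuotientGroup.eq.1 (congrArg Subtype.val ha'x), ?_⟩,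
    mul_inv_cancel_left a' x⟩
  exact hU'W (mk_mem_prod ha'U' hxW)

theorem isInducing_quotientInfToProd_of_isOpenMap_prodMul (h : IsOpenMap (prodMul A B)) :
    IsInducing (quotientInfToProd A B) := by
  rw [isInducing_iff_nhds]
  intro x
  refine le_antisymm (continuous_quotientInfToProd.tendsto x).le_comap fun S hS => ?_
  obtain ⟨g, rfl⟩ := QuotientGroup.mk_surjective x
  have hS' : QuotientGroup.mk ⁻¹' S ∈ 𝓝 g := QuotientGroup.continuous_mk.continuousAt hS
  obtain ⟨V₀, hV₀, U, hU, hV₀U⟩ := mem_nhds_prod_iff.1 <|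
    (continuous_fst.mul continuous_snd).continuousAt.preimage_mem_nhds
      (f := fun p : G × G => p.1 * p.2) (x := (g, 1)) (by rwa [mul_one])
  obtain ⟨O, hO, hOsub⟩ :=
    (isOpenMap_prodMul_iff.1 h 1 A.one_mem 1 B.one_mem U hU univ univ_mem).exists_mem
  rw [mul_one] at hO
  obtain ⟨V₁, hV₁, V₂, hV₂, hV₁V₂⟩ := mem_nhds_prod_iff.1 <|
    (continuous_fst.inv.mul continuous_snd).continuousAt.preimage_mem_nhds
      (f := fun p : G × G => p.1⁻¹ * p.2) (x := (g, g)) (by rwa [inv_mul_cancel])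
  refine ⟨(QuotientGroup.mk '' (V₀ ∩ V₁)) ×ˢ (QuotientGroup.mk '' V₂), ?_, ?_⟩
  · exact prod_mem_nhds (QuotientGroup.isOpenMap_coe.image_mem_nhds (inter_mem hV₀ hV₁))
      (QuotientGroup.isOpenMap_coe.image_mem_nhds hV₂)
  -- if `yA = vA` and `yB = v'B`, then `(v⁻¹ y) (v'⁻¹ y)⁻¹ = v⁻¹ v'` is a point of `AB` near `1`
  rintro z ⟨⟨v, ⟨hv₀, hv₁⟩, hvz⟩, ⟨v', hv', hv'z⟩⟩
  obtain ⟨y, rfl⟩ := QuotientGroup.mk_surjective z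
  rw [quotientInfToProd_apply_mk, QuotientGroup.eq] at hvz hv'z
  have hab : v⁻¹ * y * (v'⁻¹ * y)⁻¹ = v⁻¹ * v' := by group
  obtain ⟨a', ⟨ha'A, ha'U⟩, b', ⟨hb'B, -⟩, ha'b'⟩ := hOsub _ (hab ▸ hV₁V₂ (mk_mem_prod hv₁ hv'))
    (mul_mem_mul hvz (B.inv_mem hv'z))
  have hC : (v * a')⁻¹ * y = b' * (v'⁻¹ * y) := by
    rw [eq_mul_inv_iff_mul_eq] at ha'b'
    rw [mul_inv_rev, mul_assoc, ← ha'b']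
    group
  have hy : ((v * a' : G) : G ⧸ (A ⊓ B)) = y := by
    refine QuotientGroup.eq.2 (mem_inf.2 ⟨?_, hC ▸ B.mul_mem hb'B hv'z⟩)
    simpa [mul_assoc] using A.mul_mem (A.inv_mem ha'A) hvz
  rw [← hy]
  exact hV₀U (mk_mem_prod hv₀ ha'U)

theorem isOpenMap_imageFactorization_of_isInducing_quotientInfToProd
    (hind : IsInducing (quotientInfToProd A B)) :
    IsOpenMap ((A : Set G).imageFactorization (QuotientGroup.mk : G → G ⧸ B)) := by
  intro U hU
  obtain ⟨W, hW, rfl⟩ := isOpen_induced_iff.1 hU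
  obtain ⟨N, hN, hNW⟩ := hind.isOpen_iff.1 (QuotientGroup.isOpenMap_coe _ hW)
  -- for `a ∈ A`, `q (a (A ⊓ B)) = (A, aB)`: the image of `U` is a slice of the open set `N`
  refine isOpen_induced_iff.2
    ⟨_, hN.preimage (Continuous.prodMk_right ((1 : G) : G ⧸ A)), ?_⟩
  ext ⟨_, a, ha, rfl⟩
  have hqa : quotientInfToProd A B a = (((1 : G) : G ⧸ A), (a : G ⧸ B)) := by
    rw [quotientInfToProd_apply_mk, QuotientGroup.eq.2 (show a⁻¹ * 1 ∈ A by simpa using ha)]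
  simp only [mem_preimage, ← hqa, ← mem_preimage (f := quotientInfToProd A B), hNW]
  constructor
  · rintro ⟨w, hwW, hwa⟩
    have hw := mem_inf.1 (QuotientGroup.eq.1 hwa)
    refine ⟨⟨w, ?_⟩, hwW, Subtype.ext (QuotientGroup.eq.2 hw.2)⟩
    simpa using A.mul_mem ha (A.inv_mem hw.1)
  · rintro ⟨⟨w, hwA⟩, hwW, hwa⟩
    refine ⟨w, hwW, QuotientGroup.eq.2 (mem_inf.2 ⟨A.mul_mem (A.inv_mem hwA) ha, ?_⟩)⟩
    exact QuotientGroup.eq.1 (congrArg Subtype.val hwa)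

theorem isOpenMap_prodMul_iff_imageFactorization :
    IsOpenMap (prodMul A B) ↔
      IsOpenMap ((A : Set G).imageFactorization (QuotientGroup.mk : G → G ⧸ B)) :=
  ⟨isOpenMap_imageFactorization_of_prodMul, isOpenMap_prodMul_of_imageFactorization⟩

theorem isOpenMap_prodMul_comm : IsOpenMap (prodMul A B) ↔ IsOpenMap (prodMul B A) :=
  ⟨isOpenMap_prodMul_swap, isOpenMap_prodMul_swap⟩

theorem isClosedMap_quotientInfToProd_iff :
    IsClosedMap (quotientInfToProd A B) ↔
      IsClosed ((A : Set G) * (B : Set G)) ∧ IsOpenMap (prodMul A B) := by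
  constructor
  · intro h
    have he := IsClosedEmbedding.of_continuous_injective_isClosedMap
      continuous_quotientInfToProd injective_quotientInfToProd h
    exact ⟨isClosed_range_quotientInfToProd_iff.1 he.isClosed_range,
      isOpenMap_prodMul_of_imageFactorization
        (isOpenMap_imageFactorization_of_isInducing_quotientInfToProd he.isInducing)⟩
  · rintro ⟨hc, ho⟩
    exact IsClosedEmbedding.isClosedMap
      ⟨⟨isInducing_quotientInfToProd_of_isOpenMap_prodMul ho, injective_quotientInfToProd⟩,
        isClosed_range_quotientInfToProd_iff.2 hc⟩

end Subgroup

theorem stmt_16_general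
    {G : Type*} [Group G] [TopologicalSpace G] [IsTopologicalGroup G]
    (H K : Subgroup G)
    (q : G ⧸ (H ⊓ K) → (G ⧸ H) × (G ⧸ K))
    (hq : ∀ g : G, q (QuotientGroup.mk g) = (QuotientGroup.mk g, QuotientGroup.mk g)) :
    List.TFAE [
      IsClosedMap q,
      (IsClosed ((H : Set G) * (K : Set G)) ∧
        IsOpenMap (fun p : H × K =>
          (⟨(p.1 : G) * (p.2 : G), Set.mul_mem_mul p.1.2 p.2.2⟩ :
            ((H : Set G) * (K : Set G) : Set G)))),
      (IsClosed ((QuotientGroup.mk : G → G ⧸ H) '' (K : Set G)) ∧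
        IsOpenMap (fun k : K =>
          (⟨QuotientGroup.mk (k : G), Set.mem_image_of_mem _ k.2⟩ :
            ((QuotientGroup.mk : G → G ⧸ H) '' (K : Set G))))),
      (IsClosed ((QuotientGroup.mk : G → G ⧸ K) '' (H : Set G)) ∧
        IsOpenMap (fun h : H =>
          (⟨QuotientGroup.mk (h : G), Set.mem_image_of_mem _ h.2⟩ :
            ((QuotientGroup.mk : G → G ⧸ K) '' (H : Set G)))))
    ] := by
  obtain rfl : q = Subgroup.quotientInfToProd H K :=
    funext fun x => QuotientGroup.induction_on x hq
  tfae_have 1 ↔ 2 := Subgroup.isClosedMap_quotientInfToProd_iff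
  tfae_have 2 ↔ 3 := and_congr
    (Subgroup.isClosed_image_mk_iff.trans Subgroup.isClosed_coe_mul_comm).symm
    (Subgroup.isOpenMap_prodMul_comm.trans Subgroup.isOpenMap_prodMul_iff_imageFactorization)
  tfae_have 2 ↔ 4 := and_congr Subgroup.isClosed_image_mk_iff.symm
    Subgroup.isOpenMap_prodMul_iff_imageFactorization
  tfae_finish

theorem stmt_16
    {G : Type*} [Group G] [TopologicalSpace G] [IsTopologicalGroup G]
    [LocallyCompactSpace G] [T2Space G]
    (H K : Subgroup G) (hH : IsClosed (H : Set G)) (hK : IsClosed (K : Set G))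
    (q : G ⧸ (H ⊓ K) → (G ⧸ H) × (G ⧸ K))
    (hq : ∀ g : G, q (QuotientGroup.mk g) = (QuotientGroup.mk g, QuotientGroup.mk g)) :
    List.TFAE [
      IsClosedMap q,
      (IsClosed ((H : Set G) * (K : Set G)) ∧
        IsOpenMap (fun p : H × K =>
          (⟨(p.1 : G) * (p.2 : G), Set.mul_mem_mul p.1.2 p.2.2⟩ :
            ((H : Set G) * (K : Set G) : Set G)))),
      (IsClosed ((QuotientGroup.mk : G → G ⧸ H) '' (K : Set G)) ∧
        IsOpenMap (fun k : K =>
          (⟨QuotientGroup.mk (k : G), Set.mem_image_of_mem _ k.2⟩ :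
            ((QuotientGroup.mk : G → G ⧸ H) '' (K : Set G))))),
      (IsClosed ((QuotientGroup.mk : G → G ⧸ K) '' (H : Set G)) ∧
        IsOpenMap (fun h : H =>
          (⟨QuotientGroup.mk (h : G), Set.mem_image_of_mem _ h.2⟩ :
            ((QuotientGroup.mk : G → G ⧸ K) '' (H : Set G)))))
    ] :=
  stmt_16_general H K q hq
end

section
/- Let G be a locally compact Hausdorff topological group and K ⊆ H closed subgroups of G; let p_{K,H} : G/K → G/H be the natural projection gK ↦ gH. (a) If the coset space H/K (the quotient of H by its closed subgroup K, equivalently the image of H in G/K) is compact, then p_{K,H} is a proper map: the preimage of every compact subset of G/H is a compact subset of G/K. (b) If H/K is not compact, then for every a ∈ G/H the fiber p_{K,H}⁻¹({a}) is not relatively compact in G/K (its closure is not compact). -/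
/-!
The fibre of `p : G ⧸ K → G ⧸ H` over `gH` is the translate `g • (H/K)` of the closed set
`H/K ⊆ G ⧸ K`, so the fibres are all homeomorphic to `H/K`; this gives (b). For (a), a compact
`C ⊆ G ⧸ H` lifts to a compact `D ⊆ G` because `G` is locally compact and `G → G ⧸ H` is open,
and then `p⁻¹ C` is a closed subset of the compact set `D • (H/K)`.
-/

open Set Pointwise

theorem IsOpenMap.exists_isCompact_subset_image {X Y : Type*} [TopologicalSpace X]
    [TopologicalSpace Y] [WeaklyLocallyCompactSpace X] {f : X → Y} (hf : IsOpenMap f)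
    {C : Set Y} (hC : IsCompact C) (hCf : C ⊆ range f) :
    ∃ D : Set X, IsCompact D ∧ C ⊆ f '' D := by
  refine hC.induction_on ⟨∅, isCompact_empty, by simp⟩
    (fun s t hst ⟨D, hD, htD⟩ ↦ ⟨D, hD, hst.trans htD⟩)
    (fun s t ⟨D, hD, hsD⟩ ⟨E, hE, htE⟩ ↦
      ⟨D ∪ E, hD.union hE, by rw [image_union]; exact union_subset_union hsD htE⟩) ?_
  rintro _ hy
  obtain ⟨x, rfl⟩ := hCf hy
  obtain ⟨D, hD, hxD⟩ := exists_compact_mem_nhds x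
  exact ⟨f '' D, mem_nhdsWithin_of_mem_nhds (hf.image_mem_nhds hxD), D, hD, Subset.rfl⟩

namespace QuotientGroup

variable {G : Type*} [Group G] {H K : Subgroup G}

theorem preimage_mk_image_of_le (hKH : K ≤ H) :
    (mk : G → G ⧸ K) ⁻¹' (mk '' (H : Set G)) = H := by
  refine Subset.antisymm ?_ fun g hg ↦ ⟨g, hg, rfl⟩
  rintro g ⟨h, hh, hhg⟩
  simpa using H.mul_mem hh (hKH (QuotientGroup.eq.mp hhg))

theorem preimage_singleton_mk_eq_smul_image {p : G ⧸ K → G ⧸ H}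
    (hp : ∀ g : G, p (mk g) = mk g) (hKH : K ≤ H) (g : G) :
    p ⁻¹' {(mk g : G ⧸ H)} = g • (mk : G → G ⧸ K) '' (H : Set G) := by
  ext x
  obtain ⟨x, rfl⟩ := mk_surjective x
  rw [mem_preimage, hp, mem_singleton_iff, mem_smul_set_iff_inv_smul_mem,
    MulAction.Quotient.smul_mk, ← mem_preimage, preimage_mk_image_of_le hKH, smul_eq_mul,
    SetLike.mem_coe, ← QuotientGroup.eq]
  exact eq_comm

theorem preimage_image_mk_eq_smul_image {p : G ⧸ K → G ⧸ H}
    (hp : ∀ g : G, p (mk g) = mk g) (hKH : K ≤ H) (D : Set G) :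
    p ⁻¹' (mk '' D) = D • (mk : G → G ⧸ K) '' (H : Set G) := by
  rw [← iUnion_smul_set, ← biUnion_of_singleton (mk '' D), biUnion_image, preimage_iUnion₂]
  simp_rw [preimage_singleton_mk_eq_smul_image hp hKH]

variable [TopologicalSpace G]

theorem continuous_of_comp_mk {p : G ⧸ K → G ⧸ H} (hp : ∀ g : G, p (mk g) = mk g) :
    Continuous p := by
  rw [(isQuotientMap_mk K).continuous_iff, show p ∘ mk = mk from funext hp]
  exact continuous_mk

theorem isClosed_image_mk_of_le (hH : IsClosed (H : Set G)) (hKH : K ≤ H) :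
    IsClosed ((mk : G → G ⧸ K) '' (H : Set G)) := by
  rwa [← (isQuotientMap_mk K).isClosed_preimage, preimage_mk_image_of_le hKH]

end QuotientGroup

theorem stmt_17_general
    {G : Type*} [Group G] [TopologicalSpace G] [IsTopologicalGroup G]
    [LocallyCompactSpace G]
    (H K : Subgroup G) (hH : IsClosed (H : Set G))
    (hKH : K ≤ H)
    (p : G ⧸ K → G ⧸ H)
    (hp : ∀ g : G, p (QuotientGroup.mk g) = QuotientGroup.mk g) :
    (IsCompact ((QuotientGroup.mk : G → G ⧸ K) '' (H : Set G)) →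
      ∀ C : Set (G ⧸ H), IsCompact C → IsCompact (p ⁻¹' C)) ∧
    (¬ IsCompact ((QuotientGroup.mk : G → G ⧸ K) '' (H : Set G)) →
      ∀ a : G ⧸ H, ¬ IsCompact (closure (p ⁻¹' {a}))) := by
  have : T2Space (G ⧸ H) := by have := hH; infer_instance
  constructor
  · intro hQ C hC
    obtain ⟨D, hD, hCD⟩ := QuotientGroup.isOpenMap_coe.exists_isCompact_subset_image hC
      fun y _ ↦ QuotientGroup.mk_surjective y
    have hclosed : IsClosed (p ⁻¹' C) :=
      hC.isClosed.preimage (QuotientGroup.continuous_of_comp_mk hp)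
    refine (hD.smul_set hQ).of_isClosed_subset hclosed ?_
    rw [← QuotientGroup.preimage_image_mk_eq_smul_image hp hKH]
    exact preimage_mono hCD
  · rintro hQ a hfib
    obtain ⟨g, rfl⟩ := QuotientGroup.mk_surjective a
    rw [QuotientGroup.preimage_singleton_mk_eq_smul_image hp hKH, closure_smul,
      (QuotientGroup.isClosed_image_mk_of_le hH hKH).closure_eq] at hfib
    exact hQ (by simpa using hfib.smul g⁻¹)

theorem stmt_17
    {G : Type*} [Group G] [TopologicalSpace G] [IsTopologicalGroup G]
    [LocallyCompactSpace G] [T2Space G]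
    (H K : Subgroup G) (hH : IsClosed (H : Set G)) (hK : IsClosed (K : Set G))
    (hKH : K ≤ H)
    (p : G ⧸ K → G ⧸ H)
    (hp : ∀ g : G, p (QuotientGroup.mk g) = QuotientGroup.mk g) :
    (IsCompact ((QuotientGroup.mk : G → G ⧸ K) '' (H : Set G)) →
      ∀ C : Set (G ⧸ H), IsCompact C → IsCompact (p ⁻¹' C)) ∧
    (¬ IsCompact ((QuotientGroup.mk : G → G ⧸ K) '' (H : Set G)) →
      ∀ a : G ⧸ H, ¬ IsCompact (closure (p ⁻¹' {a}))) :=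
  stmt_17_general H K hH hKH p hp
end

section
/- Let G be a locally compact Hausdorff topological group and K ⊆ H closed subgroups of G; let p_{K,H} : G/K → G/H be the natural projection gK ↦ gH. (a) If the coset space H/K is compact, then for every continuous function f : G/H → ℂ vanishing at infinity, the composition f ∘ p_{K,H} : G/K → ℂ vanishes at infinity. (b) If H/K is not compact, then the only continuous function f : G/H → ℂ vanishing at infinity such that f ∘ p_{K,H} vanishes at infinity is f = 0. -/
/-! The fibre of `p : G/K → G/H` over `gH` is the translate `g • (H/K)`, and more generally
`p⁻¹(QH/H) = Q • (H/K)` for every `Q ⊆ G`. A compact `S ⊆ G/H` lies in `QH/H` for some compact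
`Q ⊆ G`, so when `H/K` is compact, `p⁻¹(S)` is a closed subset of the compact set `Q • (H/K)` as
soon as `S` is closed; this gives (a). Conversely, if `f(gH) ≠ 0` then the superlevel set of
`f ∘ p` at level `|f(gH)|` contains the fibre `g • (H/K)`, closed because `G/H` is T1, so its
compactness forces `H/K` to be compact; this gives (b). -/

open Set QuotientGroup
open scoped Pointwise

theorem IsOpenMap.exists_isCompact_image_superset {X Y : Type*} [TopologicalSpace X]
    [TopologicalSpace Y] [WeaklyLocallyCompactSpace X] {f : X → Y} (hf : IsOpenMap f)
    (hsurj : Function.Surjective f) {S : Set Y} (hS : IsCompact S) :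
    ∃ Q : Set X, IsCompact Q ∧ S ⊆ f '' Q := by
  choose x hx using hsurj
  choose V hVc hVx using fun y => exists_compact_mem_nhds (x y)
  obtain ⟨t, -, hSt⟩ := hS.elim_nhds_subcover (fun y => f '' interior (V y)) fun y _ =>
    (hf _ isOpen_interior).mem_nhds ⟨x y, mem_interior_iff_mem_nhds.2 (hVx y), hx y⟩
  refine ⟨⋃ y ∈ t, V y, t.isCompact_biUnion fun y _ => hVc y, hSt.trans ?_⟩
  rw [image_iUnion₂]
  exact iUnion₂_mono fun y _ => image_mono interior_subset

section QuotientMapOfLE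

variable {G : Type*} [Group G] {H K : Subgroup G}

theorem Subgroup.preimage_quotientMapOfLE_image_mk (hKH : K ≤ H) (Q : Set G) :
    quotientMapOfLE hKH ⁻¹' ((QuotientGroup.mk : G → G ⧸ H) '' Q) =
      Q • ((QuotientGroup.mk : G → G ⧸ K) '' H) := by
  ext y
  obtain ⟨a, rfl⟩ := mk_surjective y
  simp only [mem_preimage, quotientMapOfLE_apply_mk, mem_image, mem_smul]
  constructor
  · rintro ⟨q, hq, hqa⟩
    refine ⟨q, hq, _, ⟨q⁻¹ * a, QuotientGroup.eq.mp hqa, rfl⟩, ?_⟩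
    rw [MulAction.Quotient.smul_mk, smul_eq_mul, mul_inv_cancel_left]
  · rintro ⟨q, hq, _, ⟨h, hh, rfl⟩, hqa⟩
    rw [MulAction.Quotient.smul_mk, smul_eq_mul, QuotientGroup.eq] at hqa
    refine ⟨q, hq, QuotientGroup.eq.mpr ?_⟩
    simpa [mul_assoc] using H.mul_mem hh (hKH hqa)

variable [TopologicalSpace G]

theorem Subgroup.continuous_quotientMapOfLE (hKH : K ≤ H) : Continuous (quotientMapOfLE hKH) :=
  (isQuotientMap_mk K).continuous_iff.2 continuous_mk

variable [IsTopologicalGroup G]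

theorem Subgroup.isCompact_preimage_quotientMapOfLE [WeaklyLocallyCompactSpace G] (hKH : K ≤ H)
    (hHK : IsCompact ((QuotientGroup.mk : G → G ⧸ K) '' H)) {S : Set (G ⧸ H)} (hS : IsCompact S)
    (hSc : IsClosed S) : IsCompact (quotientMapOfLE hKH ⁻¹' S) := by
  obtain ⟨Q, hQ, hSQ⟩ :=
    (isOpenMap_coe (N := H)).exists_isCompact_image_superset mk_surjective hS
  refine (hQ.smul_set hHK).of_isClosed_subset (hSc.preimage (continuous_quotientMapOfLE hKH)) ?_
  rw [← preimage_quotientMapOfLE_image_mk]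
  exact preimage_mono hSQ

theorem Subgroup.isCompact_image_mk_of_isCompact_preimage (hH : IsClosed (H : Set G))
    (hKH : K ≤ H) {S : Set (G ⧸ H)} (hS : IsCompact (quotientMapOfLE hKH ⁻¹' S)) {g : G}
    (hg : (g : G ⧸ H) ∈ S) : IsCompact ((QuotientGroup.mk : G → G ⧸ K) '' H) := by
  have : T1Space (G ⧸ H) := t1Space_iff.2 hH
  have hfiber :
      quotientMapOfLE hKH ⁻¹' {(g : G ⧸ H)} = g • ((QuotientGroup.mk : G → G ⧸ K) '' H) := by
    rw [← image_singleton, preimage_quotientMapOfLE_image_mk, singleton_smul]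
  have hcpt : IsCompact (g • ((QuotientGroup.mk : G → G ⧸ K) '' H)) := by
    rw [← hfiber]
    exact hS.of_isClosed_subset (isClosed_singleton.preimage (continuous_quotientMapOfLE hKH))
      (preimage_mono (singleton_subset_iff.2 hg))
  simpa using hcpt.smul g⁻¹

end QuotientMapOfLE

theorem stmt_18_general
    {G : Type*} [Group G] [TopologicalSpace G] [IsTopologicalGroup G]
    [LocallyCompactSpace G]
    (H K : Subgroup G) (hH : IsClosed (H : Set G))
    (hKH : K ≤ H)
    (p : G ⧸ K → G ⧸ H)
    (hp : ∀ g : G, p (QuotientGroup.mk g) = QuotientGroup.mk g) :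
    (IsCompact ((QuotientGroup.mk : G → G ⧸ K) '' (H : Set G)) →
      ∀ f : G ⧸ H → ℂ, Continuous f →
        (∀ ε : ℝ, 0 < ε → IsCompact {x : G ⧸ H | ε ≤ ‖f x‖}) →
        (∀ ε : ℝ, 0 < ε → IsCompact {y : G ⧸ K | ε ≤ ‖f (p y)‖})) ∧
    (¬ IsCompact ((QuotientGroup.mk : G → G ⧸ K) '' (H : Set G)) →
      ∀ f : G ⧸ H → ℂ, Continuous f →
        (∀ ε : ℝ, 0 < ε → IsCompact {x : G ⧸ H | ε ≤ ‖f x‖}) →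
        (∀ ε : ℝ, 0 < ε → IsCompact {y : G ⧸ K | ε ≤ ‖f (p y)‖}) → f = 0) := by
  obtain rfl : p = Subgroup.quotientMapOfLE hKH :=
    funext fun y => QuotientGroup.induction_on y hp
  refine ⟨fun hHK f hf hf0 ε hε => ?_, fun hHK f _ _ hcomp => ?_⟩
  · exact Subgroup.isCompact_preimage_quotientMapOfLE hKH hHK (hf0 ε hε)
      (isClosed_le continuous_const hf.norm)
  · by_contra hf_ne
    obtain ⟨x, hx⟩ := Function.ne_iff.mp hf_ne
    obtain ⟨g, rfl⟩ := mk_surjective x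
    exact hHK <| Subgroup.isCompact_image_mk_of_isCompact_preimage hH hKH
      (S := {x | ‖f g‖ ≤ ‖f x‖}) (hcomp _ (norm_pos_iff.2 hx)) (le_refl ‖f g‖)

theorem stmt_18
    {G : Type*} [Group G] [TopologicalSpace G] [IsTopologicalGroup G]
    [LocallyCompactSpace G] [T2Space G]
    (H K : Subgroup G) (hH : IsClosed (H : Set G)) (hK : IsClosed (K : Set G))
    (hKH : K ≤ H)
    (p : G ⧸ K → G ⧸ H)
    (hp : ∀ g : G, p (QuotientGroup.mk g) = QuotientGroup.mk g) :
    (IsCompact ((QuotientGroup.mk : G → G ⧸ K) '' (H : Set G)) →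
      ∀ f : G ⧸ H → ℂ, Continuous f →
        (∀ ε : ℝ, 0 < ε → IsCompact {x : G ⧸ H | ε ≤ ‖f x‖}) →
        (∀ ε : ℝ, 0 < ε → IsCompact {y : G ⧸ K | ε ≤ ‖f (p y)‖})) ∧
    (¬ IsCompact ((QuotientGroup.mk : G → G ⧸ K) '' (H : Set G)) →
      ∀ f : G ⧸ H → ℂ, Continuous f →
        (∀ ε : ℝ, 0 < ε → IsCompact {x : G ⧸ H | ε ≤ ‖f x‖}) →
        (∀ ε : ℝ, 0 < ε → IsCompact {y : G ⧸ K | ε ≤ ‖f (p y)‖}) → f = 0) :=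
  stmt_18_general H K hH hKH p hp
end
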